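/- The following are equivalent: (i) S_KKT has a continuously differentiable single-valued localization around p̄ for (x̄,λ̄); (ii) T_KKT has a continuously differentiable single-valued localization around (ū,v̄) for (x̄,λ̄). -/

import Mathlib

open Function Set
open scoped InnerProductSpace

noncomputable section

namespace NEPStability

/-! ## Stability notions for set-valued mappings -/

section SetValued

variable {A B : Type*} [NormedAddCommGroup A] [NormedAddCommGroup B]

/-- The Aubin property of a set-valued mapping `Φ` at `a` for `b`. -/
def HasAubinProperty (Φ : A → Set B) (a : A) (b : B) : Prop :=
  b ∈ Φ a ∧
  (∃ ε : ℝ, 0 < ε ∧ IsClosed ({q : A × B | q.2 ∈ Φ q.1} ∩ Metric.closedBall (a, b) ε)) ∧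
  ∃ κ : ℝ, 0 ≤ κ ∧ ∃ U : Set A, ∃ V : Set B,
    IsOpen U ∧ IsOpen V ∧ a ∈ U ∧ b ∈ V ∧
    ∀ a₁ ∈ U, ∀ a₂ ∈ U, ∀ z ∈ Φ a₂ ∩ V, ∃ z' ∈ Φ a₁, ‖z - z'‖ ≤ κ * ‖a₂ - a₁‖

/-- `Φ` has a Lipschitz continuous single-valued localization around `a` for `b`. -/
def HasLipschitzLocalization (Φ : A → Set B) (a : A) (b : B) : Prop :=
  b ∈ Φ a ∧
  ∃ U : Set A, ∃ V : Set B, IsOpen U ∧ IsOpen V ∧ a ∈ U ∧ b ∈ V ∧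
    ∃ σ : A → B, (∃ K : NNReal, LipschitzOnWith K σ U) ∧ (∀ q ∈ U, σ q ∈ V) ∧
      ∀ q ∈ U, ∀ z ∈ V, (z ∈ Φ q ↔ z = σ q)

/-- `Φ` is isolated calm at `a` for `b`. -/
def IsolatedCalmAt (Φ : A → Set B) (a : A) (b : B) : Prop :=
  b ∈ Φ a ∧
  ∃ κ : ℝ, 0 ≤ κ ∧ ∃ U : Set A, ∃ V : Set B,
    IsOpen U ∧ IsOpen V ∧ a ∈ U ∧ b ∈ V ∧
    ∀ q ∈ U, ∀ z ∈ Φ q ∩ V, ‖z - b‖ ≤ κ * ‖q - a‖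

/-- `Φ` is robust isolated calm at `a` for `b`. -/
def RobustIsolatedCalmAt (Φ : A → Set B) (a : A) (b : B) : Prop :=
  b ∈ Φ a ∧
  ∃ κ : ℝ, 0 ≤ κ ∧ ∃ U : Set A, ∃ V : Set B,
    IsOpen U ∧ IsOpen V ∧ a ∈ U ∧ b ∈ V ∧
    (∀ q ∈ U, ∀ z ∈ Φ q ∩ V, ‖z - b‖ ≤ κ * ‖q - a‖) ∧
    ∀ q ∈ U, (Φ q ∩ V).Nonempty

end SetValued

section C1

variable {A B : Type*} [NormedAddCommGroup A] [NormedSpace ℝ A]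
  [NormedAddCommGroup B] [NormedSpace ℝ B]

/-- `Φ` has a continuously differentiable single-valued localization around `a` for `b`. -/
def HasC1Localization (Φ : A → Set B) (a : A) (b : B) : Prop :=
  b ∈ Φ a ∧
  ∃ U : Set A, ∃ V : Set B, IsOpen U ∧ IsOpen V ∧ a ∈ U ∧ b ∈ V ∧
    ∃ σ : A → B, ContDiffOn ℝ 1 σ U ∧ (∀ q ∈ U, σ q ∈ V) ∧
      ∀ q ∈ U, ∀ z ∈ V, (z ∈ Φ q ↔ z = σ q)

end C1

/-! ## The Nash equilibrium problem -/

/-- The data of an `N`-player Nash equilibrium problem with canonical perturbations: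
player `k` has strategy space `ℝ^{n k}`, `m k` constraints of which the first `s k` are
equalities, and parameter space `ℝ^{d k}`; `f` are the objective functions and `g` the
constraint functions. -/
structure NEPData (N : ℕ) (n m d : Fin N → ℕ) where
  s : Fin N → ℕ
  f : ∀ k : Fin N, (∀ j, EuclideanSpace ℝ (Fin (n j))) → EuclideanSpace ℝ (Fin (d k)) → ℝ
  g : ∀ k : Fin N, Fin (m k) → EuclideanSpace ℝ (Fin (n k)) → EuclideanSpace ℝ (Fin (d k)) → ℝ

/-- Inner product of two strategy profiles. -/
def pinner {N : ℕ} {n : Fin N → ℕ} (y z : ∀ j, EuclideanSpace ℝ (Fin (n j))) : ℝ :=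
  ∑ k, ⟪y k, z k⟫_ℝ

/-- Polar cone of a set of strategy profiles. -/
def polarCone {N : ℕ} {n : Fin N → ℕ} (K : Set (∀ j, EuclideanSpace ℝ (Fin (n j)))) :
    Set (∀ j, EuclideanSpace ℝ (Fin (n j))) :=
  {z | ∀ y ∈ K, pinner z y ≤ 0}

namespace NEPData

variable {N : ℕ} {n m d : Fin N → ℕ} (P : NEPData N n m d)

/-- The gradient `∇_{x^k} L^k(x,λ^k;w^k)` of player `k`'s Lagrangian with respect to
its own strategy. -/
def gradLag (k : Fin N) (x : ∀ j, EuclideanSpace ℝ (Fin (n j)))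
    (lk : EuclideanSpace ℝ (Fin (m k))) (wk : EuclideanSpace ℝ (Fin (d k))) :
    EuclideanSpace ℝ (Fin (n k)) :=
  gradient (fun y : EuclideanSpace ℝ (Fin (n k)) =>
    P.f k (Function.update x k y) wk + ∑ i, lk i * P.g k i y wk) (x k)

/-- The gradient `∇_{x^k} g^k_i(x^k;w^k)`. -/
def gradg (k : Fin N) (i : Fin (m k)) (xk : EuclideanSpace ℝ (Fin (n k)))
    (wk : EuclideanSpace ℝ (Fin (d k))) : EuclideanSpace ℝ (Fin (n k)) :=
  gradient (fun y => P.g k i y wk) xk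

/-- The Hessian block `∇²_{x^k x^i} L^k(x,λ^k;w^k)`, as a continuous linear map from
player `i`'s space to player `k`'s space. -/
def hessLag (k i : Fin N) (x : ∀ j, EuclideanSpace ℝ (Fin (n j)))
    (lk : EuclideanSpace ℝ (Fin (m k))) (wk : EuclideanSpace ℝ (Fin (d k))) :
    EuclideanSpace ℝ (Fin (n i)) →L[ℝ] EuclideanSpace ℝ (Fin (n k)) :=
  fderiv ℝ (fun y : EuclideanSpace ℝ (Fin (n i)) =>
    P.gradLag k (Function.update x i y) lk wk) (x i)

/-- The KKT solution mapping `S_KKT` of the NEP with canonical perturbations: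
`p = (u,v,w)`. -/
def SKKT (p : (∀ k, EuclideanSpace ℝ (Fin (m k))) × (∀ j, EuclideanSpace ℝ (Fin (n j)))
      × (∀ k, EuclideanSpace ℝ (Fin (d k)))) :
    Set ((∀ j, EuclideanSpace ℝ (Fin (n j))) × (∀ k, EuclideanSpace ℝ (Fin (m k)))) :=
  {xl | ∀ k,
    P.gradLag k xl.1 (xl.2 k) (p.2.2 k) = p.2.1 k ∧
    (∀ i : Fin (m k), (i : ℕ) < P.s k → P.g k i (xl.1 k) (p.2.2 k) = p.1 k i) ∧
    (∀ i : Fin (m k), P.s k ≤ (i : ℕ) →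
      0 ≤ xl.2 k i ∧ P.g k i (xl.1 k) (p.2.2 k) ≤ p.1 k i ∧
      xl.2 k i * (P.g k i (xl.1 k) (p.2.2 k) - p.1 k i) = 0)}

/-- The KKT solution mapping `T_KKT` of the NEP with only tilt perturbations, the
parameter `w` being fixed at `wb`. -/
def TKKT (wb : ∀ k, EuclideanSpace ℝ (Fin (d k)))
    (uv : (∀ k, EuclideanSpace ℝ (Fin (m k))) × (∀ j, EuclideanSpace ℝ (Fin (n j)))) :
    Set ((∀ j, EuclideanSpace ℝ (Fin (n j))) × (∀ k, EuclideanSpace ℝ (Fin (m k)))) :=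
  P.SKKT (uv.1, uv.2, wb)

/-- The linearized KKT mapping `L_KKT` at the reference point `(pb, xb, lb)`. -/
def LKKT (pb : (∀ k, EuclideanSpace ℝ (Fin (m k))) × (∀ j, EuclideanSpace ℝ (Fin (n j)))
      × (∀ k, EuclideanSpace ℝ (Fin (d k))))
    (xb : ∀ j, EuclideanSpace ℝ (Fin (n j))) (lb : ∀ k, EuclideanSpace ℝ (Fin (m k)))
    (uv : (∀ k, EuclideanSpace ℝ (Fin (m k))) × (∀ j, EuclideanSpace ℝ (Fin (n j)))) :
    Set ((∀ j, EuclideanSpace ℝ (Fin (n j))) × (∀ k, EuclideanSpace ℝ (Fin (m k)))) :=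
  {xl | ∀ k,
    uv.2 k = P.gradLag k xb (lb k) (pb.2.2 k)
      + ∑ i, P.hessLag k i xb (lb k) (pb.2.2 k) (xl.1 i - xb i)
      + ∑ j, (xl.2 k j - lb k j) • P.gradg k j (xb k) (pb.2.2 k) ∧
    (∀ i : Fin (m k), (i : ℕ) < P.s k →
      P.g k i (xb k) (pb.2.2 k) + ⟪P.gradg k i (xb k) (pb.2.2 k), xl.1 k - xb k⟫_ℝ
        = uv.1 k i) ∧
    (∀ i : Fin (m k), P.s k ≤ (i : ℕ) →
      0 ≤ xl.2 k i ∧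
      P.g k i (xb k) (pb.2.2 k) + ⟪P.gradg k i (xb k) (pb.2.2 k), xl.1 k - xb k⟫_ℝ
        ≤ uv.1 k i ∧
      xl.2 k i * (P.g k i (xb k) (pb.2.2 k)
        + ⟪P.gradg k i (xb k) (pb.2.2 k), xl.1 k - xb k⟫_ℝ - uv.1 k i) = 0)}

section Reference

variable (pb : (∀ k, EuclideanSpace ℝ (Fin (m k))) × (∀ j, EuclideanSpace ℝ (Fin (n j)))
    × (∀ k, EuclideanSpace ℝ (Fin (d k))))
  (xb : ∀ j, EuclideanSpace ℝ (Fin (n j))) (lb : ∀ k, EuclideanSpace ℝ (Fin (m k)))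

/-- The index set `I^k_1` of equality and strongly active inequality constraints. -/
def idx1 (k : Fin N) : Set (Fin (m k)) :=
  {i | (i : ℕ) < P.s k ∨
    (P.s k ≤ (i : ℕ) ∧ 0 < lb k i ∧ P.g k i (xb k) (pb.2.2 k) = pb.1 k i)}

/-- The index set `I^k_2` of weakly active inequality constraints. -/
def idx2 (k : Fin N) : Set (Fin (m k)) :=
  {i | P.s k ≤ (i : ℕ) ∧ lb k i = 0 ∧ P.g k i (xb k) (pb.2.2 k) = pb.1 k i}

/-- The index set `I^k_3` of inactive inequality constraints. -/
def idx3 (k : Fin N) : Set (Fin (m k)) :=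
  {i | P.s k ≤ (i : ℕ) ∧ lb k i = 0 ∧ P.g k i (xb k) (pb.2.2 k) < pb.1 k i}

/-- The linear independence constraint qualification for player `k`. -/
def LICQ (k : Fin N) : Prop :=
  LinearIndependent ℝ
    (fun i : ↥(P.idx1 pb xb lb k ∪ P.idx2 pb xb lb k) => P.gradg k i.1 (xb k) (pb.2.2 k))

/-- The strict Mangasarian–Fromovitz constraint qualification for player `k`. -/
def SMFCQ (k : Fin N) : Prop :=
  LinearIndependent ℝ (fun i : ↥(P.idx1 pb xb lb k) => P.gradg k i.1 (xb k) (pb.2.2 k)) ∧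
  ∃ y : EuclideanSpace ℝ (Fin (n k)),
    (∀ i ∈ P.idx1 pb xb lb k, ⟪P.gradg k i (xb k) (pb.2.2 k), y⟫_ℝ = 0) ∧
    (∀ i ∈ P.idx2 pb xb lb k, ⟪P.gradg k i (xb k) (pb.2.2 k), y⟫_ℝ < 0)

/-- The strict complementary slackness condition for player `k`. -/
def SCSC (k : Fin N) : Prop := P.idx2 pb xb lb k = ∅

/-- The cone `K(J_1,J_2)` associated with families of index sets `J_1, J_2`. -/
def Kcone (J1 J2 : ∀ k, Set (Fin (m k))) : Set (∀ j, EuclideanSpace ℝ (Fin (n j))) :=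
  {y | ∀ k, (∀ i ∈ J1 k, ⟪P.gradg k i (xb k) (pb.2.2 k), y k⟫_ℝ = 0) ∧
            (∀ i ∈ J2 k, ⟪P.gradg k i (xb k) (pb.2.2 k), y k⟫_ℝ ≤ 0)}

/-- Membership in the index partition set `𝓘`. -/
def IsCriticalPartition (J1 J2 J3 : ∀ k, Set (Fin (m k))) : Prop :=
  ∀ k, J1 k ∪ J2 k ∪ J3 k = Set.univ ∧
    Disjoint (J1 k) (J2 k) ∧ Disjoint (J1 k) (J3 k) ∧ Disjoint (J2 k) (J3 k) ∧
    P.idx1 pb xb lb k ⊆ J1 k ∧ J1 k ⊆ P.idx1 pb xb lb k ∪ P.idx2 pb xb lb k ∧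
    P.idx3 pb xb lb k ⊆ J3 k ∧ J3 k ⊆ P.idx2 pb xb lb k ∪ P.idx3 pb xb lb k

/-- The subspace `M^k`, the null space of the gradients of player `k`'s strongly
active constraints. -/
def Mset (k : Fin N) : Set (EuclideanSpace ℝ (Fin (n k))) :=
  {y | ∀ i ∈ P.idx1 pb xb lb k, ⟪P.gradg k i (xb k) (pb.2.2 k), y⟫_ℝ = 0}

/-- The critical cone of player `k`. -/
def critCone (k : Fin N) : Set (EuclideanSpace ℝ (Fin (n k))) :=
  {y | (∀ i ∈ P.idx1 pb xb lb k, ⟪P.gradg k i (xb k) (pb.2.2 k), y⟫_ℝ = 0) ∧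
       (∀ i ∈ P.idx2 pb xb lb k, ⟪P.gradg k i (xb k) (pb.2.2 k), y⟫_ℝ ≤ 0)}

/-- The strong second-order sufficient condition for player `k`. -/
def SSOSC (k : Fin N) : Prop :=
  ∀ y ∈ P.Mset pb xb lb k, y ≠ 0 → 0 < ⟪y, P.hessLag k k xb (lb k) (pb.2.2 k) y⟫_ℝ

/-- The second-order sufficient condition for player `k`. -/
def SOSC (k : Fin N) : Prop :=
  ∀ y ∈ P.critCone pb xb lb k, y ≠ 0 → 0 < ⟪y, P.hessLag k k xb (lb k) (pb.2.2 k) y⟫_ℝ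

/-- The matrix `A_{ki} := ∇²_{x^k x^i}L^k + (∇²_{x^i x^k}L^i)ᵀ`. -/
def Amap (k i : Fin N) :
    EuclideanSpace ℝ (Fin (n i)) →L[ℝ] EuclideanSpace ℝ (Fin (n k)) :=
  P.hessLag k i xb (lb k) (pb.2.2 k) + (P.hessLag i k xb (lb i) (pb.2.2 i)).adjoint

/-- `B` is a family of basis matrices: `B k` has `n k - |I^k_1|` columns forming a
basis of `M^k`. -/
def IsBasisFamily
    (B : ∀ k, EuclideanSpace ℝ (Fin (n k - (P.idx1 pb xb lb k).ncard)) →L[ℝ]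
      EuclideanSpace ℝ (Fin (n k))) : Prop :=
  ∀ k, Function.Injective (B k) ∧ Set.range (B k) = P.Mset pb xb lb k

/-- Condition (α): the coupling condition on the Hessian blocks with parameters `α`
and basis matrices `B`. -/
def CondAlpha
    (B : ∀ k, EuclideanSpace ℝ (Fin (n k - (P.idx1 pb xb lb k).ncard)) →L[ℝ]
      EuclideanSpace ℝ (Fin (n k)))
    (α : Fin N → Fin N → ℝ) : Prop :=
  ∀ i k : Fin N, i ≠ k → ∀ y ∈ P.Mset pb xb lb k, y ≠ 0 →
    0 < ⟪y, (P.hessLag k k xb (lb k) (pb.2.2 k)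
      - (1 / (4 * α i k * α k i)) •
        ((P.Amap pb xb lb i k).adjoint.comp ((B i).comp
          ((Ring.inverse (((B i).adjoint).comp
            ((P.hessLag i i xb (lb i) (pb.2.2 i)).comp (B i)))).comp
            (((B i).adjoint).comp (P.Amap pb xb lb i k)))))) y⟫_ℝ

/-- The I-property on `K(I_1,I_2)`. -/
def IProperty : Prop :=
  ∀ y ∈ P.Kcone pb xb (P.idx1 pb xb lb) (P.idx2 pb xb lb),
    (∀ k, ∑ i, ⟪y k, P.hessLag k i xb (lb k) (pb.2.2 k) (y i)⟫_ℝ = 0) → y = 0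

/-- The P-property on `K(I_1,I_2)`. -/
def PProperty : Prop :=
  ∀ y ∈ P.Kcone pb xb (P.idx1 pb xb lb) (P.idx2 pb xb lb), y ≠ 0 →
    ∃ k, 0 < (∑ i ∈ Finset.univ.erase k,
        ⟪y k, P.hessLag k i xb (lb k) (pb.2.2 k) (y i)⟫_ℝ)
      + (1 / 2) * ⟪y k, P.hessLag k k xb (lb k) (pb.2.2 k) (y k)⟫_ℝ

end Reference

/-- The feasible set of player `k` at the perturbation `(uk, wk)`. -/
def feasSet (k : Fin N) (uk : EuclideanSpace ℝ (Fin (m k)))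
    (wk : EuclideanSpace ℝ (Fin (d k))) : Set (EuclideanSpace ℝ (Fin (n k))) :=
  {y | (∀ i : Fin (m k), (i : ℕ) < P.s k → P.g k i y wk = uk i) ∧
       (∀ i : Fin (m k), P.s k ≤ (i : ℕ) → P.g k i y wk ≤ uk i)}

/-- `x` is a local Nash equilibrium of the NEP at the perturbation `p`. -/
def IsLocalNash (p : (∀ k, EuclideanSpace ℝ (Fin (m k))) × (∀ j, EuclideanSpace ℝ (Fin (n j)))
      × (∀ k, EuclideanSpace ℝ (Fin (d k))))
    (x : ∀ j, EuclideanSpace ℝ (Fin (n j))) : Prop :=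
  ∀ k, x k ∈ P.feasSet k (p.1 k) (p.2.2 k) ∧
    ∃ ε : ℝ, 0 < ε ∧ ∀ y ∈ P.feasSet k (p.1 k) (p.2.2 k), ‖y - x k‖ < ε →
      P.f k x (p.2.2 k) - ⟪p.2.1 k, x k⟫_ℝ
        ≤ P.f k (Function.update x k y) (p.2.2 k) - ⟪p.2.1 k, y⟫_ℝ

/-- `x` is a (global) Nash equilibrium of the NEP at the perturbation `p`. -/
def IsNash (p : (∀ k, EuclideanSpace ℝ (Fin (m k))) × (∀ j, EuclideanSpace ℝ (Fin (n j)))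
      × (∀ k, EuclideanSpace ℝ (Fin (d k))))
    (x : ∀ j, EuclideanSpace ℝ (Fin (n j))) : Prop :=
  ∀ k, x k ∈ P.feasSet k (p.1 k) (p.2.2 k) ∧
    ∀ y ∈ P.feasSet k (p.1 k) (p.2.2 k),
      P.f k x (p.2.2 k) - ⟪p.2.1 k, x k⟫_ℝ
        ≤ P.f k (Function.update x k y) (p.2.2 k) - ⟪p.2.1 k, y⟫_ℝ

/-- The convex assumptions on the NEP. -/
def ConvexAssumptions : Prop :=
  (∀ (k : Fin N) (x : ∀ j, EuclideanSpace ℝ (Fin (n j))) (w : EuclideanSpace ℝ (Fin (d k))),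
    ConvexOn ℝ Set.univ (fun y : EuclideanSpace ℝ (Fin (n k)) =>
      P.f k (Function.update x k y) w)) ∧
  (∀ (k : Fin N) (i : Fin (m k)), (i : ℕ) < P.s k →
    ∀ w : EuclideanSpace ℝ (Fin (d k)),
      ∃ (l : EuclideanSpace ℝ (Fin (n k)) →L[ℝ] ℝ) (c : ℝ), ∀ y, P.g k i y w = l y + c) ∧
  (∀ (k : Fin N) (i : Fin (m k)), P.s k ≤ (i : ℕ) →
    ∀ w : EuclideanSpace ℝ (Fin (d k)),
      ConvexOn ℝ Set.univ (fun y : EuclideanSpace ℝ (Fin (n k)) => P.g k i y w))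

/-- Smoothness of the data: each `f^k` is `C²` jointly in `(x,w^k)` and each `g^k_i`
is `C²` jointly in `(x^k,w^k)`. -/
def IsC2Data : Prop :=
  (∀ k : Fin N, ContDiff ℝ 2 (fun q : (∀ j, EuclideanSpace ℝ (Fin (n j)))
      × EuclideanSpace ℝ (Fin (d k)) => P.f k q.1 q.2)) ∧
  (∀ (k : Fin N) (i : Fin (m k)), ContDiff ℝ 2 (fun q : EuclideanSpace ℝ (Fin (n k))
      × EuclideanSpace ℝ (Fin (d k)) => P.g k i q.1 q.2))

end NEPData

end NEPStability


/-!
Restricting a localization of `S_KKT` to `w = w̄` gives one of `T_KKT`. Conversely, a change of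
`w` is absorbed by the tilt parameters: `(x, λ) ∈ S_KKT(u, v, w)` iff `(x, λ)` lies in
`T_KKT(u + g(x; w̄) - g(x; w), v + ∇L(x, λ; w̄) - ∇L(x, λ; w))`. So if `σ` localizes `T_KKT`, a
localization of `S_KKT` is obtained by solving `z = σ(φ(p, z))` for `z`, where `φ` is this shift.
At `w = w̄` the shift does not depend on `z`, so the partial derivative in `z` of
`z - σ(φ(p, z))` is the identity and the implicit function theorem applies.
-/

open scoped Topology

theorem ContDiff.gradient {X E : Type*} [NormedAddCommGroup X] [NormedSpace ℝ X]
    [NormedAddCommGroup E] [InnerProductSpace ℝ E] [CompleteSpace E]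
    {F : X → E → ℝ} {g : X → E} {k l : WithTop ℕ∞} (hF : ContDiff ℝ k (uncurry F))
    (hg : ContDiff ℝ l g) (hlk : l + 1 ≤ k) :
    ContDiff ℝ l fun x => gradient (F x) (g x) :=
  ((InnerProductSpace.toDual ℝ E).symm.toContinuousLinearEquiv :
    StrongDual ℝ E ≃L[ℝ] E).contDiff.comp (hF.fderiv hg hlk)

section Pi

variable {𝕜 E ι : Type*} [NontriviallyNormedField 𝕜] [NormedAddCommGroup E] [NormedSpace 𝕜 E]
  [Fintype ι] {F : ι → Type*} [∀ i, NormedAddCommGroup (F i)] [∀ i, NormedSpace 𝕜 (F i)]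
  {k : WithTop ℕ∞}

@[fun_prop]
theorem contDiff_pi_apply (i : ι) : ContDiff 𝕜 k fun f : (∀ i, F i) => f i :=
  contDiff_pi.1 contDiff_id i

@[fun_prop]
theorem ContDiff.update [DecidableEq ι] {f : E → ∀ i, F i} {i : ι} {g : E → F i}
    (hf : ContDiff 𝕜 k f) (hg : ContDiff 𝕜 k g) :
    ContDiff 𝕜 k fun x => update (f x) i (g x) := by
  refine contDiff_pi.2 fun j => ?_
  rcases eq_or_ne j i with rfl | hji
  · simpa using hg
  · simpa [hji] using contDiff_pi.1 hf j

end Pi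

namespace NEPStability

section Localization

variable {A B C : Type*} [NormedAddCommGroup A] [NormedSpace ℝ A]
  [NormedAddCommGroup B] [NormedSpace ℝ B] [NormedAddCommGroup C] [NormedSpace ℝ C]
  {Φ : A → Set B} {a : A} {b : B}

theorem hasC1Localization_iff_eventually :
    HasC1Localization Φ a b ↔ ∃ σ : A → B, ContDiffAt ℝ 1 σ a ∧ σ a = b ∧
      ∀ᶠ q in 𝓝 (a, b), q.2 ∈ Φ q.1 ↔ q.2 = σ q.1 := by
  constructor
  · rintro ⟨hb, U, V, hU, hV, haU, hbV, σ, hσ, -, hσΦ⟩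
    refine ⟨σ, hσ.contDiffAt (hU.mem_nhds haU), ((hσΦ a haU b hbV).1 hb).symm, ?_⟩
    filter_upwards [prod_mem_nhds (hU.mem_nhds haU) (hV.mem_nhds hbV)] with q hq
    exact hσΦ q.1 hq.1 q.2 hq.2
  · rintro ⟨σ, hσ, rfl, hev⟩
    obtain ⟨U₁, V, hU₁, haU₁, hV, hbV, hUV⟩ := mem_nhds_prod_iff'.1 hev
    obtain ⟨s, hs, hσs⟩ := hσ.contDiffOn le_rfl (by simp)
    have hU : s ∩ U₁ ∩ σ ⁻¹' V ∈ 𝓝 a :=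
      Filter.inter_mem (Filter.inter_mem hs (hU₁.mem_nhds haU₁))
        (hσ.continuousAt.preimage_mem_nhds (hV.mem_nhds hbV))
    refine ⟨(hUV (mk_mem_prod haU₁ hbV)).2 rfl, interior (s ∩ U₁ ∩ σ ⁻¹' V), V, isOpen_interior,
      hV, mem_interior_iff_mem_nhds.2 hU, hbV, σ, hσs.mono (interior_subset.trans ?_),
      fun q hq => (interior_subset hq).2,
      fun q hq z hz => hUV (mk_mem_prod (interior_subset hq).1.2 hz)⟩
    exact inter_subset_left.trans inter_subset_left

theorem HasC1Localization.comp (h : HasC1Localization Φ a b) {ι : C → A} {c : C}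
    (hι : ContDiffAt ℝ 1 ι c) (hc : ι c = a) : HasC1Localization (Φ ∘ ι) c b := by
  obtain ⟨σ, hσ, hσa, hev⟩ := hasC1Localization_iff_eventually.1 h
  subst hc
  have hlift : Filter.Tendsto (fun q : C × B => (ι q.1, q.2)) (𝓝 (c, b)) (𝓝 (ι c, b)) :=
    (hι.continuousAt.comp continuousAt_fst).prodMk continuousAt_snd
  exact hasC1Localization_iff_eventually.2 ⟨σ ∘ ι, hσ.comp c hι, hσa, hlift.eventually hev⟩

theorem HasC1Localization.of_reparam [CompleteSpace A] [CompleteSpace B] {T : C → Set B}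
    {c : C} (hT : HasC1Localization T c b) {φ : A × B → C} (hφ : ContDiffAt ℝ 1 φ (a, b))
    (hφa : ∀ z, φ (a, z) = c) (hΦT : ∀ p z, z ∈ Φ p ↔ z ∈ T (φ (p, z))) :
    HasC1Localization Φ a b := by
  obtain ⟨σ, hσ, hσc, hev⟩ := hasC1Localization_iff_eventually.1 hT
  set F : A × B → B := fun q => q.2 - σ (φ q)
  have hF : ContDiffAt ℝ 1 F (a, b) := contDiffAt_snd.sub (((hφa b).symm ▸ hσ).comp _ hφ)
  have hFab : F (a, b) = 0 := by simp [F, hφa, hσc]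
  have hF₂ : fderiv ℝ F (a, b) ∘L .inr ℝ A B = .id ℝ B := by
    have hline : HasFDerivAt (F ∘ fun z => (a, z)) (fderiv ℝ F (a, b) ∘L .inr ℝ A B) b :=
      (hF.differentiableAt one_ne_zero).hasFDerivAt.comp b (hasFDerivAt_prodMk_right a b)
    have hconst : (F ∘ fun z => (a, z)) = fun z => z - σ c := by
      funext z
      simp [F, hφa]
    rw [hconst] at hline
    exact hline.unique ((hasFDerivAt_id b).sub_const _)
  have hinv : (fderiv ℝ F (a, b) ∘L .inr ℝ A B).IsInvertible := hF₂ ▸ ⟨.refl ℝ B, rfl⟩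
  have hlift : Filter.Tendsto (fun q : A × B => (φ q, q.2)) (𝓝 (a, b)) (𝓝 (c, b)) := by
    simpa only [hφa] using (hφ.continuousAt.prodMk continuousAt_snd).tendsto
  refine hasC1Localization_iff_eventually.2 ⟨hF.implicitFunction one_ne_zero hinv,
    hF.contDiffAt_implicitFunction one_ne_zero hinv,
    hF.implicitFunction_apply_self one_ne_zero hinv, ?_⟩
  filter_upwards [hF.eventually_apply_eq_iff_implicitFunction one_ne_zero hinv,
    hlift.eventually hev] with q hψ hσ
  rw [hΦT, hσ, ← sub_eq_zero, ← hψ.trans eq_comm, hFab]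

end Localization

abbrev Profile {N : ℕ} (a : Fin N → ℕ) : Type := ∀ k, EuclideanSpace ℝ (Fin (a k))

namespace NEPData

variable {N : ℕ} {n m d : Fin N → ℕ} (P : NEPData N n m d)

theorem contDiff_gradLag (hC2 : P.IsC2Data) (k : Fin N) :
    ContDiff ℝ 1 fun q : Profile n × EuclideanSpace ℝ (Fin (m k)) ×
        EuclideanSpace ℝ (Fin (d k)) => P.gradLag k q.1 q.2.1 q.2.2 := by
  have hf := hC2.1 k
  have hg := hC2.2 k
  refine ContDiff.gradient
    (F := fun (q : Profile n × EuclideanSpace ℝ (Fin (m k)) × EuclideanSpace ℝ (Fin (d k))) y =>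
      P.f k (update q.1 k y) q.2.2 + ∑ i, q.2.1 i * P.g k i y q.2.2) ?_ (by fun_prop) le_rfl
  fun_prop

def constraintMap (k : Fin N) (xk : EuclideanSpace ℝ (Fin (n k)))
    (wk : EuclideanSpace ℝ (Fin (d k))) : EuclideanSpace ℝ (Fin (m k)) :=
  WithLp.toLp 2 fun i => P.g k i xk wk

theorem contDiff_constraintMap (hC2 : P.IsC2Data) (k : Fin N) :
    ContDiff ℝ 2 fun q : EuclideanSpace ℝ (Fin (n k)) × EuclideanSpace ℝ (Fin (d k)) =>
      P.constraintMap k q.1 q.2 :=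
  PiLp.contDiff_toLp.comp (contDiff_pi.2 (hC2.2 k))

def tiltShift (wb : Profile d)
    (q : (Profile m × Profile n × Profile d) × (Profile n × Profile m)) :
    Profile m × Profile n :=
  (fun k => q.1.1 k +
      (P.constraintMap k (q.2.1 k) (wb k) - P.constraintMap k (q.2.1 k) (q.1.2.2 k)),
    fun k => q.1.2.1 k +
      (P.gradLag k q.2.1 (q.2.2 k) (wb k) - P.gradLag k q.2.1 (q.2.2 k) (q.1.2.2 k)))

theorem tiltShift_self (p : Profile m × Profile n × Profile d) (z : Profile n × Profile m) :
    P.tiltShift p.2.2 (p, z) = (p.1, p.2.1) := by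
  simp only [tiltShift, sub_self, add_zero]

theorem mem_SKKT_iff_mem_TKKT_tiltShift (wb : Profile d)
    (p : Profile m × Profile n × Profile d) (z : Profile n × Profile m) :
    z ∈ P.SKKT p ↔ z ∈ P.TKKT wb (P.tiltShift wb (p, z)) := by
  simp only [SKKT, TKKT, tiltShift, Set.mem_ofPred_eq, PiLp.add_apply, PiLp.sub_apply,
    constraintMap]
  refine forall_congr' fun k => and_congr ?_ (and_congr ?_ ?_)
  · rw [← sub_eq_iff_eq_add', sub_right_inj, eq_comm]
  · refine forall₂_congr fun i _ => ?_
    rw [← sub_eq_iff_eq_add', sub_right_inj, eq_comm]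
  · refine forall₂_congr fun i _ => and_congr_right' (and_congr ?_ ?_)
    · constructor <;> intro h <;> linarith
    · ring_nf

theorem contDiff_tiltShift (hC2 : P.IsC2Data) (wb : Profile d) :
    ContDiff ℝ 1 (P.tiltShift wb) := by
  have hL := P.contDiff_gradLag hC2
  have hG k := (P.contDiff_constraintMap hC2 k).of_le one_le_two
  unfold tiltShift
  fun_prop

end NEPData

end NEPStability

open NEPStability

theorem stmt7_general {N : ℕ} {n m d : Fin N → ℕ} (P : NEPData N n m d)
    (hC2 : P.IsC2Data)
    (pb : (∀ k, EuclideanSpace ℝ (Fin (m k))) × (∀ j, EuclideanSpace ℝ (Fin (n j)))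
      × (∀ k, EuclideanSpace ℝ (Fin (d k))))
    (xb : ∀ j, EuclideanSpace ℝ (Fin (n j))) (lb : ∀ k, EuclideanSpace ℝ (Fin (m k))) :
    HasC1Localization P.SKKT pb (xb, lb) ↔
      HasC1Localization (P.TKKT pb.2.2) (pb.1, pb.2.1) (xb, lb) := by
  constructor
  · intro hS
    exact hS.comp (ι := fun uv : Profile m × Profile n => (uv.1, uv.2, pb.2.2)) (by fun_prop) rfl
  · intro hT
    exact hT.of_reparam (P.contDiff_tiltShift hC2 pb.2.2).contDiffAt (P.tiltShift_self pb)
      (P.mem_SKKT_iff_mem_TKKT_tiltShift pb.2.2)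

/-- Corollary 4.2: continuously differentiable localization of `S_KKT` is equivalent to that of `T_KKT`. -/
theorem stmt7 {N : ℕ} {n m d : Fin N → ℕ} (P : NEPData N n m d)
    (hC2 : P.IsC2Data)
    (pb : (∀ k, EuclideanSpace ℝ (Fin (m k))) × (∀ j, EuclideanSpace ℝ (Fin (n j)))
      × (∀ k, EuclideanSpace ℝ (Fin (d k))))
    (xb : ∀ j, EuclideanSpace ℝ (Fin (n j))) (lb : ∀ k, EuclideanSpace ℝ (Fin (m k)))
    (hsol : (xb, lb) ∈ P.SKKT pb) :
    HasC1Localization P.SKKT pb (xb, lb) ↔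
      HasC1Localization (P.TKKT pb.2.2) (pb.1, pb.2.1) (xb, lb) :=
  stmt7_general P hC2 pb xb lb
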